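/- Let G be a group, φ an endomorphism of G, and suppose there exists n ≥ 0 such that φ restricted to φⁿ(G) is injective. Then the ascending HNN extension HNN_φ(G) is isomorphic to the ascending HNN extension HNN_{φ'}(φⁿ(G)), where φ' is the restriction of φ to φⁿ(G). -/

import Mathlib

/-- The relations of the ascending HNN extension (mapping torus) of an endomorphism `φ`
of a group `G`: the multiplication table of `G` together with `t g t⁻¹ = φ g`. -/
def hnnRel {G : Type} [Group G] (φ : G →* G) : Set (FreeGroup (G ⊕ Unit)) :=
  { r | (∃ g h : G, r = FreeGroup.of (Sum.inl g) * FreeGroup.of (Sum.inl h) *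
            (FreeGroup.of (Sum.inl (g * h)))⁻¹) ∨
        (∃ g : G, r = FreeGroup.of (Sum.inr ()) * FreeGroup.of (Sum.inl g) *
            (FreeGroup.of (Sum.inr ()))⁻¹ * (FreeGroup.of (Sum.inl (φ g)))⁻¹) }

/-- The ascending HNN extension `HNN_φ(G)`. -/
def HNNExt {G : Type} [Group G] (φ : G →* G) : Type := PresentedGroup (hnnRel φ)

instance {G : Type} [Group G] (φ : G →* G) : Group (HNNExt φ) := by
  unfold HNNExt; infer_instance

/-- The image of `g ∈ G` in the HNN extension. -/
def hnnBase {G : Type} [Group G] (φ : G →* G) (g : G) : HNNExt φ :=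
  PresentedGroup.of (Sum.inl g)

/-- The stable letter `t` of the HNN extension. -/
def hnnT {G : Type} [Group G] (φ : G →* G) : HNNExt φ :=
  PresentedGroup.of (Sum.inr ())

/-- The `n`-th power `φⁿ` of an endomorphism. -/
def iterHom {G : Type} [Group G] (φ : G →* G) : ℕ → (G →* G)
  | 0 => MonoidHom.id G
  | n + 1 => φ.comp (iterHom φ n)

theorem iterHom_comm {G : Type} [Group G] (φ : G →* G) (n : ℕ) (g : G) :
    φ (iterHom φ n g) = iterHom φ n (φ g) := by
  induction n with
  | zero => rfl
  | succ n ih => simp [iterHom, ih]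

/-- The restriction `φ' : φⁿ(G) → φⁿ(G)` of `φ` to the image subgroup `φⁿ(G)`. -/
def resEndo {G : Type} [Group G] (φ : G →* G) (n : ℕ) :
    (iterHom φ n).range →* (iterHom φ n).range :=
  MonoidHom.codRestrict (φ.domRestrict (iterHom φ n).range) (iterHom φ n).range
    (by rintro ⟨x, g, rfl⟩; exact ⟨φ g, (iterHom_comm φ n g).symm⟩)

/-!
Send `g ∈ G` to `t⁻ⁿ φⁿ(g) tⁿ` in `HNN_{φ'}(φⁿ(G))` and `t` to `t`; this respects the relations
because `t` commutes with `tⁿ`. In the other direction `φⁿ(G) ⊆ G` and `t ↦ t`. Both composites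
fix the generators since `tⁿ g t⁻ⁿ = φⁿ(g)` holds in either extension.
-/

namespace HNNExt

variable {G : Type} [Group G] (φ : G →* G)

theorem hnnBase_mul (g h : G) : hnnBase φ g * hnnBase φ h = hnnBase φ (g * h) :=
  PresentedGroup.mk_eq_mk_of_mul_inv_mem (Or.inl ⟨g, h, rfl⟩)

theorem hnnT_mul_hnnBase_mul_inv (g : G) :
    hnnT φ * hnnBase φ g * (hnnT φ)⁻¹ = hnnBase φ (φ g) :=
  PresentedGroup.mk_eq_mk_of_mul_inv_mem (Or.inr ⟨g, rfl⟩)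

theorem hnnT_pow_mul_hnnBase_mul_inv (k : ℕ) (g : G) :
    hnnT φ ^ k * hnnBase φ g * (hnnT φ ^ k)⁻¹ = hnnBase φ (iterHom φ k g) := by
  induction k with
  | zero => simp [iterHom]
  | succ k ih =>
    calc hnnT φ ^ (k + 1) * hnnBase φ g * (hnnT φ ^ (k + 1))⁻¹
        = hnnT φ * (hnnT φ ^ k * hnnBase φ g * (hnnT φ ^ k)⁻¹) * (hnnT φ)⁻¹ := by group
      _ = hnnBase φ (iterHom φ (k + 1) g) := by rw [ih, hnnT_mul_hnnBase_mul_inv]; rfl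

theorem inv_hnnT_pow_mul_hnnBase_iterHom_mul (k : ℕ) (g : G) :
    (hnnT φ ^ k)⁻¹ * hnnBase φ (iterHom φ k g) * hnnT φ ^ k = hnnBase φ g := by
  rw [← hnnT_pow_mul_hnnBase_mul_inv]; group

def baseHom : G →* HNNExt φ :=
  MonoidHom.mk' (hnnBase φ) fun g h => (hnnBase_mul φ g h).symm

@[simp]
theorem baseHom_apply (g : G) : baseHom φ g = hnnBase φ g := rfl

section Lift

variable {φ} {H : Type} [Group H]

def lift (f : G →* H) (t : H) (hf : ∀ g, t * f g * t⁻¹ = f (φ g)) : HNNExt φ →* H :=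
  PresentedGroup.toGroup (f := Sum.elim f fun _ => t) <| by
    rintro r (⟨g, h, rfl⟩ | ⟨g, rfl⟩) <;> simp [hf]

@[simp]
theorem lift_hnnBase (f : G →* H) (t : H) (hf : ∀ g, t * f g * t⁻¹ = f (φ g)) (g : G) :
    lift f t hf (hnnBase φ g) = f g :=
  PresentedGroup.toGroup.of _

@[simp]
theorem lift_hnnT (f : G →* H) (t : H) (hf : ∀ g, t * f g * t⁻¹ = f (φ g)) :
    lift f t hf (hnnT φ) = t :=
  PresentedGroup.toGroup.of _

@[ext]
theorem hom_ext {F F' : HNNExt φ →* H} (hbase : ∀ g, F (hnnBase φ g) = F' (hnnBase φ g))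
    (hT : F (hnnT φ) = F' (hnnT φ)) : F = F' :=
  PresentedGroup.ext <| by rintro (g | ⟨⟩); exacts [hbase g, hT]

end Lift

section Restrict

variable (n : ℕ)

theorem coe_iterHom_resEndo (k : ℕ) (x : (iterHom φ n).range) :
    (iterHom (resEndo φ n) k x : G) = iterHom φ k x := by
  induction k with
  | zero => rfl
  | succ k ih => exact congrArg φ ih

theorem resEndo_rangeRestrict (g : G) :
    resEndo φ n ((iterHom φ n).rangeRestrict g) = (iterHom φ n).rangeRestrict (φ g) :=
  Subtype.ext (iterHom_comm φ n g)

def toRestrict : HNNExt φ →* HNNExt (resEndo φ n) :=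
  lift ((MulAut.conj (hnnT (resEndo φ n) ^ n)⁻¹).toMonoidHom.comp
      ((baseHom (resEndo φ n)).comp (iterHom φ n).rangeRestrict))
    (hnnT (resEndo φ n)) <| by
      intro g
      simp only [MonoidHom.comp_apply, MulEquiv.coe_toMonoidHom, MulAut.conj_apply,
        baseHom_apply, inv_inv, ← resEndo_rangeRestrict, ← hnnT_mul_hnnBase_mul_inv]
      group

@[simp]
theorem toRestrict_hnnBase (g : G) :
    toRestrict φ n (hnnBase φ g) = (hnnT (resEndo φ n) ^ n)⁻¹ *
      hnnBase (resEndo φ n) ((iterHom φ n).rangeRestrict g) * hnnT (resEndo φ n) ^ n :=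
  (lift_hnnBase _ _ _ g).trans <| by
    simp only [MonoidHom.comp_apply, MulEquiv.coe_toMonoidHom, MulAut.conj_apply, baseHom_apply,
      inv_inv]

@[simp]
theorem toRestrict_hnnT : toRestrict φ n (hnnT φ) = hnnT (resEndo φ n) :=
  lift_hnnT _ _ _

def ofRestrict : HNNExt (resEndo φ n) →* HNNExt φ :=
  lift ((baseHom φ).comp (iterHom φ n).range.subtype) (hnnT φ) <| by
    intro x
    exact hnnT_mul_hnnBase_mul_inv φ x

@[simp]
theorem ofRestrict_hnnBase (x : (iterHom φ n).range) :
    ofRestrict φ n (hnnBase (resEndo φ n) x) = hnnBase φ x :=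
  lift_hnnBase _ _ _ x

@[simp]
theorem ofRestrict_hnnT : ofRestrict φ n (hnnT (resEndo φ n)) = hnnT φ :=
  lift_hnnT _ _ _

theorem ofRestrict_comp_toRestrict : (ofRestrict φ n).comp (toRestrict φ n) = .id _ := by
  ext g
  · simpa using inv_hnnT_pow_mul_hnnBase_iterHom_mul φ n g
  · simp

theorem toRestrict_comp_ofRestrict : (toRestrict φ n).comp (ofRestrict φ n) = .id _ := by
  ext x
  · have hx : (iterHom φ n).rangeRestrict x = iterHom (resEndo φ n) n x :=
      Subtype.ext (coe_iterHom_resEndo φ n n x).symm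
    simpa [hx] using inv_hnnT_pow_mul_hnnBase_iterHom_mul (resEndo φ n) n x
  · simp

end Restrict

end HNNExt

open HNNExt in
theorem hnn_iso_hnn_of_restriction_general {G : Type} [Group G] (φ : G →* G) (n : ℕ) :
    Nonempty (HNNExt φ ≃* HNNExt (resEndo φ n)) :=
  ⟨(toRestrict φ n).toMulEquiv (ofRestrict φ n) (ofRestrict_comp_toRestrict φ n)
    (toRestrict_comp_ofRestrict φ n)⟩

/-- If `φ` is injective on `φⁿ(G)`, then `HNN_φ(G) ≅ HNN_{φ'}(φⁿ(G))` where `φ'`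
is the restriction of `φ` to `φⁿ(G)`. -/
theorem hnn_iso_hnn_of_restriction {G : Type} [Group G] (φ : G →* G) (n : ℕ)
    (hinj : Function.Injective (resEndo φ n)) :
    Nonempty (HNNExt φ ≃* HNNExt (resEndo φ n)) :=
  hnn_iso_hnn_of_restriction_general φ n
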